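/- arXiv:2001.07106 — 4 statements merged into one kernel-verified Lean document; each statement's English description precedes it below -/
import Mathlib

section
/- Let G be a connected simple graph on n ≥ 3 vertices in which vertex 1 is a leaf whose unique neighbor is vertex 2. Then for every α ∈ ℝ the local operator acting as e^{iαX} on qubit 1, e^{-iαZ} on qubit 2, and the identity on all other qubits lies in U_G. Conversely, every element of U_G of the form U₁⊗U₂⊗𝟙^{⊗(n-2)} satisfies U₁ ∝ e^{iαX} and U₂ ∝ e^{-iαZ} for some α ∈ ℝ. -/
open Matrix
open scoped Classical

noncomputable section

/-- The state space of `n` qubits. -/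
abbrev QState (n : ℕ) := (Fin n → Fin 2) → ℂ

/-- Single-qubit operators. -/
abbrev Mat2 := Matrix (Fin 2) (Fin 2) ℂ

/-- Operators on `n` qubits. -/
abbrev MatQ (n : ℕ) := Matrix (Fin n → Fin 2) (Fin n → Fin 2) ℂ

/-- Pauli X. -/
def PX : Mat2 := !![0, 1; 1, 0]

/-- Pauli Y. -/
def PY : Mat2 := !![0, -Complex.I; Complex.I, 0]

/-- Pauli Z. -/
def PZ : Mat2 := !![1, 0; 0, -1]

/-- The Kronecker (tensor) product `A₁ ⊗ ⋯ ⊗ A_n` of single-qubit operators. -/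
def localOp {n : ℕ} (A : Fin n → Mat2) : MatQ n := fun x y => ∏ j, A j (x j) (y j)

/-- The single-qubit Pauli group `P₁ = ⟨X, Y, Z⟩`. -/
def P1 : Submonoid Mat2 := Submonoid.closure {PX, PY, PZ}

/-- The `n`-qubit Pauli group: generated by `n`-fold tensor products of `1, X, Y, Z`. -/
def PN (n : ℕ) : Submonoid (MatQ n) :=
  Submonoid.closure
    { M | ∃ A : Fin n → Mat2, (∀ j, A j = 1 ∨ A j = PX ∨ A j = PY ∨ A j = PZ) ∧ M = localOp A }

/-- Membership in the single-qubit Clifford group `C₁`. -/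
def IsClifford1 (U : Mat2) : Prop :=
  U ∈ Matrix.unitaryGroup (Fin 2) ℂ ∧ ∀ σ ∈ P1, U * σ * Uᴴ ∈ P1

/-- `C₁³`: single-qubit Clifford operators of order `3`. -/
def IsC13 (U : Mat2) : Prop := IsClifford1 U ∧ U ^ 3 = 1 ∧ U ≠ 1

/-- The matrix exponential `e^{iασ}`. -/
def uexp (α : ℝ) (σ : Mat2) : Mat2 := NormedSpace.exp ((Complex.I * (α : ℂ)) • σ)

/-- `A` is proportional to `B` (by a nonzero scalar). -/
def PropTo {α : Type*} [SMul ℂ α] (A B : α) : Prop := ∃ c : ℂ, c ≠ 0 ∧ A = c • B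

/-- The graph state of a simple graph on `Fin n`:
`|G⟩(x) = 2^{-n/2} (-1)^{#{edges both of whose endpoints i satisfy x i = 1}}`. -/
def graphState {n : ℕ} (G : SimpleGraph (Fin n)) : QState n := fun x =>
  (((Real.sqrt 2)⁻¹ ^ n : ℝ) : ℂ) *
    (-1 : ℂ) ^ (Finset.univ.filter fun e : Sym2 (Fin n) =>
        e ∈ G.edgeSet ∧ ∀ i ∈ e, x i = 1).card

/-- The `k`-th tensor factor of the canonical stabilizer generator `S_(j)` of a graph state:
`X` on qubit `j`, `Z` on the neighbours of `j`, identity elsewhere. -/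
def canonGenFactor {n : ℕ} (G : SimpleGraph (Fin n)) (j k : Fin n) : Mat2 :=
  if k = j then PX else if G.Adj j k then PZ else 1

/-- The canonical stabilizer generator `S_(j)` of a graph state. -/
def canonGen {n : ℕ} (G : SimpleGraph (Fin n)) (j : Fin n) : MatQ n :=
  localOp (canonGenFactor G j)

/-- The stabilizer group `S_G` of a graph state. -/
def stabGroup {n : ℕ} (G : SimpleGraph (Fin n)) : Submonoid (MatQ n) :=
  Submonoid.closure (Set.range (canonGen G))

/-- An `n`-qubit operator is a local unitary if it is a tensor product of `2×2` unitaries. -/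
def IsLocalUnitary {n : ℕ} (U : MatQ n) : Prop :=
  ∃ A : Fin n → Mat2, (∀ j, A j ∈ Matrix.unitaryGroup (Fin 2) ℂ) ∧ U = localOp A

/-- The local unitary symmetry group `U_G` of the graph state of `G`. -/
def symUG {n : ℕ} (G : SimpleGraph (Fin n)) : Set (MatQ n) :=
  { U | IsLocalUnitary U ∧ ∃ c : ℂ, U.mulVec (graphState G) = c • graphState G }

/-- `|G⟩ ∈ T`: no element of `U_G` has a tensor factor proportional to an element of `C₁³`. -/
def inT {n : ℕ} (G : SimpleGraph (Fin n)) : Prop :=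
  ∀ A : Fin n → Mat2, (∀ j, A j ∈ Matrix.unitaryGroup (Fin 2) ℂ) →
    localOp A ∈ symUG G → ∀ j, ¬ ∃ C : Mat2, IsC13 C ∧ PropTo (A j) C

/-- Local complementation of a graph at a vertex `v`. -/
def localComp {V : Type*} (G : SimpleGraph V) (v : V) : SimpleGraph V where
  Adj a b := a ≠ b ∧ Xor' (G.Adj a b) (G.Adj v a ∧ G.Adj v b)
  symm := by
    constructor
    intro a b h
    obtain ⟨hab, h⟩ := h
    refine ⟨hab.symm, ?_⟩
    have h1 : G.Adj b a = G.Adj a b := propext (G.adj_comm b a)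
    have h2 : (G.Adj v b ∧ G.Adj v a) = (G.Adj v a ∧ G.Adj v b) := propext and_comm
    rw [h1, h2]
    exact h
  loopless := by constructor; intro a h; exact h.1 rfl

/-- A vertex is a leaf up to local complementation if some finite sequence of local
complementations turns the graph into one in which it has exactly one neighbour. -/
def IsLeafUpToLC {n : ℕ} (G : SimpleGraph (Fin n)) (v : Fin n) : Prop :=
  ∃ l : List (Fin n), ∃! w, (l.foldl localComp G).Adj v w

/-- The generating set of leaf symmetries, for leaf-parent pairs, twins and connected twins. -/
def leafSymSet {n : ℕ} (G : SimpleGraph (Fin n)) : Set (MatQ n) :=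
  { U | ∃ (α : ℝ) (l p : Fin n),
      (G.neighborSet l = {p} ∧
        U = localOp fun k => if k = l then uexp α PX else if k = p then uexp (-α) PZ else 1) ∨
      (l ≠ p ∧ G.neighborSet l = G.neighborSet p ∧
        U = localOp fun k => if k = l then uexp α PX else if k = p then uexp (-α) PX else 1) ∨
      (G.Adj l p ∧ G.neighborSet l \ {p} = G.neighborSet p \ {l} ∧
        U = localOp fun k => if k = l then uexp α PY else if k = p then uexp (-α) PY else 1) }

/-- The group `L_G` generated by all leaf symmetries of `G`. -/
def LG {n : ℕ} (G : SimpleGraph (Fin n)) : Submonoid (MatQ n) :=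
  Submonoid.closure (leafSymSet G)

/-- An `n`-qubit stabilizer state: a nonzero state `ψ` together with `n` independent, pairwise
commuting elements of the Pauli group generating a subgroup not containing `-1`, all of which
stabilize `ψ`. -/
structure StabState (n : ℕ) where
  ψ : QState n
  g : Fin n → MatQ n
  ψ_ne : ψ ≠ 0
  g_mem : ∀ j, g j ∈ PN n
  g_comm : ∀ j k, Commute (g j) (g k)
  g_indep : ∀ s : Finset (Fin n),
    s.noncommProd g (fun a _ b _ _ => g_comm a b) = 1 → s = ∅
  neg_one_not : (-1 : MatQ n) ∉ Submonoid.closure (Set.range g)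
  stabilizes : ∀ j, (g j).mulVec ψ = ψ

/-- The stabilizer group `S_ψ` of a stabilizer state. -/
def StabState.stab {n : ℕ} (s : StabState n) : Submonoid (MatQ n) :=
  Submonoid.closure (Set.range s.g)

/-- `ψ` is a product state across the bipartition `(S, Sᶜ)` of the qubits. -/
def ProductAcross {n : ℕ} (ψ : QState n) (S : Set (Fin n)) : Prop :=
  ∃ (φ : (S → Fin 2) → ℂ) (χ : ((Sᶜ : Set (Fin n)) → Fin 2) → ℂ),
    ∀ x, ψ x = φ (fun j => x j.1) * χ (fun j => x j.1)

/-- A state is fully entangled if it is not a product across any nontrivial bipartition. -/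
def FullyEntangled {n : ℕ} (ψ : QState n) : Prop :=
  ∀ S : Set (Fin n), S ≠ ∅ → S ≠ Set.univ → ¬ ProductAcross ψ S

/-- The adjacency matrix of a graph over `𝔽₂`. -/
def adjMat {n : ℕ} (G : SimpleGraph (Fin n)) : Matrix (Fin n) (Fin n) (ZMod 2) :=
  Matrix.of fun i j => if G.Adj i j then 1 else 0



section AuxStmt3

lemma uexp_PZ (α : ℝ) : uexp α PZ
    = !![Complex.exp (Complex.I * α), 0; 0, Complex.exp (-(Complex.I * α))] := by
  have h : (Complex.I * (α:ℂ)) • PZ = Matrix.diagonal ![Complex.I * α, -(Complex.I * α)] := by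
    ext i j
    fin_cases i <;> fin_cases j <;> simp [PZ, Matrix.diagonal] <;> ring
  rw [uexp, h, Matrix.exp_diagonal]
  ext i j
  fin_cases i <;> fin_cases j <;>
    simp [Matrix.diagonal, Complex.exp_eq_exp_ℂ]

def Pmat : Mat2 := !![1, 1; 1, -1]

lemma Pmat_mul : Pmat * ((2:ℂ)⁻¹ • Pmat) = 1 := by
  ext i j
  fin_cases i <;> fin_cases j <;>
    simp [Pmat, Matrix.mul_apply, Fin.sum_univ_two, Matrix.one_apply] <;> ring

def Punit : (Mat2)ˣ := ⟨Pmat, (2:ℂ)⁻¹ • Pmat, Pmat_mul, by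
  ext i j
  fin_cases i <;> fin_cases j <;>
    simp [Pmat, Matrix.mul_apply, Fin.sum_univ_two, Matrix.one_apply] <;> ring⟩

lemma uexp_PX (α : ℝ) : uexp α PX
    = (2:ℂ)⁻¹ • !![Complex.exp (Complex.I * α) + Complex.exp (-(Complex.I * α)),
        Complex.exp (Complex.I * α) - Complex.exp (-(Complex.I * α));
        Complex.exp (Complex.I * α) - Complex.exp (-(Complex.I * α)),
        Complex.exp (Complex.I * α) + Complex.exp (-(Complex.I * α))] := by
  have h : (Complex.I * (α:ℂ)) • PX = ↑Punit * ((Complex.I * (α:ℂ)) • PZ) * ↑(Punit⁻¹) := by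
    show _ = Pmat * _ * ((2:ℂ)⁻¹ • Pmat)
    ext i j
    fin_cases i <;> fin_cases j <;>
      simp [Pmat, PX, PZ, Matrix.mul_apply, Fin.sum_univ_two] <;> ring
  rw [uexp, h, Matrix.exp_units_conj]
  have : NormedSpace.exp ((Complex.I * (α:ℂ)) • PZ) = uexp α PZ := rfl
  rw [this, uexp_PZ]
  show Pmat * _ * ((2:ℂ)⁻¹ • Pmat) = _
  ext i j
  fin_cases i <;> fin_cases j <;>
    simp [Pmat, Matrix.mul_apply, Fin.sum_univ_two] <;> ring

lemma exp_I_mul_neg (α : ℝ) :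
    Complex.exp (Complex.I * α) * Complex.exp (-(Complex.I * α)) = 1 := by
  rw [← Complex.exp_add]; simp

lemma conj_exp_I (α : ℝ) :
    (starRingEnd ℂ) (Complex.exp (Complex.I * α)) = Complex.exp (-(Complex.I * α)) := by
  rw [← Complex.exp_conj]; congr 1; simp [Complex.conj_ofReal]

lemma conj_exp_I' (α : ℝ) :
    (starRingEnd ℂ) (Complex.exp (-(Complex.I * α))) = Complex.exp (Complex.I * α) := by
  rw [← Complex.exp_conj]; congr 1; simp [Complex.conj_ofReal]

lemma exp_I_mul_neg' (α : ℝ) :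
    Complex.exp (-(Complex.I * α)) * Complex.exp (Complex.I * α) = 1 := by
  rw [mul_comm]; exact exp_I_mul_neg α

lemma uexp_PZ_unitary (α : ℝ) : uexp α PZ ∈ Matrix.unitaryGroup (Fin 2) ℂ := by
  rw [Matrix.mem_unitaryGroup_iff]
  rw [uexp_PZ]
  ext i j
  fin_cases i <;> fin_cases j <;>
    simp [Matrix.mul_apply, Fin.sum_univ_two, Matrix.one_apply, Matrix.star_apply,
      conj_exp_I, conj_exp_I', exp_I_mul_neg, exp_I_mul_neg']

lemma uexp_PX_unitary (α : ℝ) : uexp α PX ∈ Matrix.unitaryGroup (Fin 2) ℂ := by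
  rw [Matrix.mem_unitaryGroup_iff]
  have h : Complex.exp (Complex.I * α) * Complex.exp (-(Complex.I * α)) = 1 :=
    exp_I_mul_neg α
  have hs : star (uexp α PX) = (2:ℂ)⁻¹ •
      !![Complex.exp (-(Complex.I * α)) + Complex.exp (Complex.I * α),
         Complex.exp (-(Complex.I * α)) - Complex.exp (Complex.I * α);
         Complex.exp (-(Complex.I * α)) - Complex.exp (Complex.I * α),
         Complex.exp (-(Complex.I * α)) + Complex.exp (Complex.I * α)] := by
    rw [uexp_PX]
    ext i j
    fin_cases i <;> fin_cases j <;>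
      simp [Matrix.star_apply, Complex.star_def, map_add, map_sub, _root_.map_mul, map_inv₀,
        Complex.conj_ofNat, conj_exp_I, conj_exp_I']
  rw [hs, uexp_PX]
  ext i j
  fin_cases i <;> fin_cases j <;>
    simp [Matrix.mul_apply, Fin.sum_univ_two, Matrix.one_apply] <;>
    first
      | ring1
      | linear_combination h

variable {n : ℕ}

def upd2 (i0 i1 : Fin n) (x : Fin n → Fin 2) (a b : Fin 2) : Fin n → Fin 2 :=
  fun k => if k = i0 then a else if k = i1 then b else x k

lemma upd2_apply_i0 {i0 i1 : Fin n} (x : Fin n → Fin 2) (a b : Fin 2) :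
    upd2 i0 i1 x a b i0 = a := by simp [upd2]

lemma upd2_apply_i1 {i0 i1 : Fin n} (h01 : i0 ≠ i1) (x : Fin n → Fin 2) (a b : Fin 2) :
    upd2 i0 i1 x a b i1 = b := by simp [upd2, h01.symm]

lemma upd2_apply_other {i0 i1 : Fin n} {k : Fin n} (hk0 : k ≠ i0) (hk1 : k ≠ i1)
    (x : Fin n → Fin 2) (a b : Fin 2) : upd2 i0 i1 x a b k = x k := by simp [upd2, hk0, hk1]

lemma upd2_upd2 {i0 i1 : Fin n} (x : Fin n → Fin 2) (a b a' b' : Fin 2) :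
    upd2 i0 i1 (upd2 i0 i1 x a' b') a b = upd2 i0 i1 x a b := by
  funext k
  simp only [upd2]
  split_ifs <;> rfl

lemma upd2_self {i0 i1 : Fin n} (x : Fin n → Fin 2) :
    upd2 i0 i1 x (x i0) (x i1) = x := by
  funext k
  simp only [upd2]
  split_ifs with h1 h2 <;> first | rw [h1] | rw [h2] | rfl

lemma mulVec_localOp_two (i0 i1 : Fin n) (h01 : i0 ≠ i1) (U₁ U₂ : Mat2) (ψ : QState n)
    (x : Fin n → Fin 2) :
    (localOp fun k => if k = i0 then U₁ else if k = i1 then U₂ else 1).mulVec ψ x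
      = ∑ a : Fin 2, ∑ b : Fin 2, U₁ (x i0) a * U₂ (x i1) b * ψ (upd2 i0 i1 x a b) := by
  classical
  set A : Fin n → Mat2 := fun k => if k = i0 then U₁ else if k = i1 then U₂ else 1 with hA
  have key : ∀ p : Fin 2 × Fin 2,
      (∏ j, A j (x j) (upd2 i0 i1 x p.1 p.2 j)) = U₁ (x i0) p.1 * U₂ (x i1) p.2 := by
    intro p
    have hsub : ({i0, i1} : Finset (Fin n)) ⊆ Finset.univ := Finset.subset_univ _
    have hone : ∀ j ∈ Finset.univ, j ∉ ({i0, i1} : Finset (Fin n)) →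
        A j (x j) (upd2 i0 i1 x p.1 p.2 j) = 1 := by
      intro j _ hj
      simp only [Finset.mem_insert, Finset.mem_singleton, not_or] at hj
      rw [upd2_apply_other hj.1 hj.2]
      simp [hA, hj.1, hj.2, Matrix.one_apply]
    rw [← Finset.prod_subset hsub hone, Finset.prod_pair h01]
    rw [upd2_apply_i0, upd2_apply_i1 h01]
    simp [hA, h01.symm]
  have hinj : Function.Injective (fun p : Fin 2 × Fin 2 => upd2 i0 i1 x p.1 p.2) := by
    intro p q hpq
    have h0 := congrFun hpq i0
    have h1 := congrFun hpq i1
    simp only [upd2_apply_i0, upd2_apply_i1 h01] at h0 h1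
    exact Prod.ext h0 h1
  have hvan : ∀ y ∈ Finset.univ, y ∉ Finset.image (fun p : Fin 2 × Fin 2 => upd2 i0 i1 x p.1 p.2)
      Finset.univ → (∏ j, A j (x j) (y j)) * ψ y = 0 := by
    intro y _ hy
    have : ∃ j, j ≠ i0 ∧ j ≠ i1 ∧ y j ≠ x j := by
      by_contra hcon
      push_neg at hcon
      apply hy
      refine Finset.mem_image.2 ⟨(y i0, y i1), Finset.mem_univ _, ?_⟩
      funext k
      simp only [upd2]
      split_ifs with h1 h2
      · rw [h1]
      · rw [h2]
      · exact (hcon k h1 h2).symm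
    obtain ⟨j, hj0, hj1, hjne⟩ := this
    have hz : A j (x j) (y j) = 0 := by
      simp [hA, hj0, hj1, Matrix.one_apply, (Ne.symm hjne)]
    rw [Finset.prod_eq_zero (Finset.mem_univ j) hz, zero_mul]
  calc (localOp A).mulVec ψ x = ∑ y, (∏ j, A j (x j) (y j)) * ψ y := by
        simp [Matrix.mulVec, dotProduct, localOp]
    _ = ∑ y ∈ Finset.image (fun p : Fin 2 × Fin 2 => upd2 i0 i1 x p.1 p.2) Finset.univ,
          (∏ j, A j (x j) (y j)) * ψ y :=
        (Finset.sum_subset (Finset.subset_univ _) hvan).symm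
    _ = ∑ p : Fin 2 × Fin 2, (∏ j, A j (x j) (upd2 i0 i1 x p.1 p.2 j)) * ψ (upd2 i0 i1 x p.1 p.2) :=
        Finset.sum_image fun p _ q _ h => hinj h
    _ = ∑ a : Fin 2, ∑ b : Fin 2, U₁ (x i0) a * U₂ (x i1) b * ψ (upd2 i0 i1 x a b) := by
        rw [Fintype.sum_prod_type]
        exact Finset.sum_congr rfl fun a _ => Finset.sum_congr rfl fun b _ => by rw [key (a, b)]

def sgn (a b : Fin 2) : ℂ := if a = 1 ∧ b = 1 then -1 else 1

open scoped Classical in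
def wgt (G : SimpleGraph (Fin n)) (i0 i1 : Fin n) (x : Fin n → Fin 2) (b : Fin 2) : ℂ :=
  (-1 : ℂ) ^ (Finset.univ.filter fun e : Sym2 (Fin n) =>
      e ∈ G.edgeSet ∧ e ≠ s(i0, i1) ∧ ∀ i ∈ e, upd2 i0 i1 x 0 b i = 1).card

lemma wgt_upd2 (G : SimpleGraph (Fin n)) (i0 i1 : Fin n) (x : Fin n → Fin 2)
    (a' b' b : Fin 2) : wgt G i0 i1 (upd2 i0 i1 x a' b') b = wgt G i0 i1 x b := by
  unfold wgt
  rw [upd2_upd2]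

lemma graphState_upd2 (G : SimpleGraph (Fin n)) (i0 i1 : Fin n) (h01 : i0 ≠ i1)
    (hleaf : G.neighborSet i0 = {i1}) (x : Fin n → Fin 2) (a b : Fin 2) :
    graphState G (upd2 i0 i1 x a b)
      = (((Real.sqrt 2)⁻¹ ^ n : ℝ) : ℂ) * (sgn a b * wgt G i0 i1 x b) := by
  classical
  have hadj : G.Adj i0 i1 := by
    have : i1 ∈ G.neighborSet i0 := by rw [hleaf]; exact Set.mem_singleton _
    exact this
  have hnotmem : ∀ e ∈ G.edgeSet, e ≠ s(i0, i1) → i0 ∉ e := by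
    intro e he hne hmem
    induction e with
    | _ u v =>
      rw [Sym2.mem_iff] at hmem
      rw [SimpleGraph.mem_edgeSet] at he
      rcases hmem with h | h
      · have hv : v ∈ G.neighborSet i0 := h ▸ he
        rw [hleaf, Set.mem_singleton_iff] at hv
        exact hne (by rw [h, hv])
      · have hu : u ∈ G.neighborSet i0 := h ▸ SimpleGraph.Adj.symm he
        rw [hleaf, Set.mem_singleton_iff] at hu
        apply hne
        rw [h, hu]
        exact Sym2.eq_swap
  set F := Finset.univ.filter fun e : Sym2 (Fin n) =>
      e ∈ G.edgeSet ∧ ∀ i ∈ e, upd2 i0 i1 x a b i = 1 with hF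
  have hsplit : F = (F.filter (· = s(i0, i1))) ∪ (F.filter (· ≠ s(i0, i1))) :=
    (Finset.filter_union_filter_not_eq _ F).symm
  have hdisj : Disjoint (F.filter (· = s(i0, i1))) (F.filter (· ≠ s(i0, i1))) :=
    Finset.disjoint_filter_filter_not F F _
  have hcard : F.card = (F.filter (· = s(i0, i1))).card + (F.filter (· ≠ s(i0, i1))).card := by
    rw [← Finset.card_union_of_disjoint hdisj, ← hsplit]
  -- first part
  have h1 : (F.filter (· = s(i0, i1))) = if a = 1 ∧ b = 1 then {s(i0, i1)} else ∅ := by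
    rw [Finset.filter_eq']
    congr 1
    simp only [hF, Finset.mem_filter, Finset.mem_univ, true_and, eq_iff_iff]
    constructor
    · rintro ⟨-, hsat⟩
      exact ⟨by have := hsat i0 (Sym2.mem_mk_left _ _); rwa [upd2_apply_i0] at this,
             by have := hsat i1 (Sym2.mem_mk_right _ _); rwa [upd2_apply_i1 h01] at this⟩
    · rintro ⟨ha, hb⟩
      refine ⟨G.mem_edgeSet.mpr hadj, ?_⟩
      intro i hi
      rw [Sym2.mem_iff] at hi
      rcases hi with h | h
      · subst h; rw [upd2_apply_i0]; exact ha
      · subst h; rw [upd2_apply_i1 h01]; exact hb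
  have h1card : ((-1 : ℂ)) ^ (F.filter (· = s(i0, i1))).card = sgn a b := by
    rw [h1, sgn]
    split_ifs <;> simp
  -- second part
  have h2 : (F.filter (· ≠ s(i0, i1))) = Finset.univ.filter fun e : Sym2 (Fin n) =>
      e ∈ G.edgeSet ∧ e ≠ s(i0, i1) ∧ ∀ i ∈ e, upd2 i0 i1 x 0 b i = 1 := by
    ext e
    simp only [hF, Finset.mem_filter, Finset.mem_univ, true_and]
    constructor
    · rintro ⟨⟨he, hsat⟩, hne⟩
      refine ⟨he, hne, ?_⟩
      intro i hi
      have hi0 : i ≠ i0 := fun h => hnotmem e he hne (h ▸ hi)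
      have := hsat i hi
      by_cases hi1 : i = i1
      · subst hi1
        rwa [upd2_apply_i1 h01] at this ⊢
      · rwa [upd2_apply_other hi0 hi1] at this ⊢
    · rintro ⟨he, hne, hsat⟩
      refine ⟨⟨he, ?_⟩, hne⟩
      intro i hi
      have hi0 : i ≠ i0 := fun h => hnotmem e he hne (h ▸ hi)
      have := hsat i hi
      by_cases hi1 : i = i1
      · subst hi1
        rwa [upd2_apply_i1 h01] at this ⊢
      · rwa [upd2_apply_other hi0 hi1] at this ⊢
  rw [graphState, ← hF, hcard, pow_add, h1card, h2, wgt]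

lemma graphState_eq_self (G : SimpleGraph (Fin n)) (i0 i1 : Fin n) (h01 : i0 ≠ i1)
    (hleaf : G.neighborSet i0 = {i1}) (x : Fin n → Fin 2) :
    graphState G x
      = (((Real.sqrt 2)⁻¹ ^ n : ℝ) : ℂ) * (sgn (x i0) (x i1) * wgt G i0 i1 x (x i1)) := by
  conv_lhs => rw [← upd2_self (i0 := i0) (i1 := i1) x]
  exact graphState_upd2 G i0 i1 h01 hleaf x (x i0) (x i1)

lemma fin2_eq_zero_or_one (a : Fin 2) : a = 0 ∨ a = 1 := by omega

lemma wgt_zero (G : SimpleGraph (Fin n)) (i0 i1 : Fin n) (b : Fin 2) :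
    wgt G i0 i1 (fun _ => 0) b = 1 := by
  classical
  have hempty : (Finset.univ.filter fun e : Sym2 (Fin n) =>
      e ∈ G.edgeSet ∧ e ≠ s(i0, i1) ∧ ∀ i ∈ e, upd2 i0 i1 (fun _ => (0 : Fin 2)) 0 b i = 1)
      = ∅ := by
    rw [Finset.filter_eq_empty_iff]
    rintro e -
    rintro ⟨he, hne, hsat⟩
    induction e with
    | _ u v =>
      have huv : u ≠ v := G.ne_of_adj (G.mem_edgeSet.mp he)
      have key : ∀ i, upd2 i0 i1 (fun _ => (0 : Fin 2)) 0 b i = 1 → i = i1 := by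
        intro i hi
        simp only [upd2] at hi
        split_ifs at hi with h1 h2
        · exact absurd hi (by decide)
        · exact h2
        · exact absurd hi (by decide)
      have hu := key u (hsat u (Sym2.mem_mk_left _ _))
      have hv := key v (hsat v (Sym2.mem_mk_right _ _))
      exact huv (hu.trans hv.symm)
  rw [wgt, hempty]
  simp

lemma wgt_single (G : SimpleGraph (Fin n)) (i0 i1 v : Fin n) (h01 : i0 ≠ i1)
    (hv1 : G.Adj i1 v) (hv0 : v ≠ i0) (b : Fin 2) :
    wgt G i0 i1 (fun k => if k = v then 1 else 0) b = if b = 1 then -1 else 1 := by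
  classical
  have hvne : v ≠ i1 := fun h => G.loopless.irrefl i1 (h ▸ hv1)
  set x : Fin n → Fin 2 := fun k => if k = v then 1 else 0 with hx
  rcases fin2_eq_zero_or_one b with hb | hb
  · subst hb
    have hempty : (Finset.univ.filter fun e : Sym2 (Fin n) =>
        e ∈ G.edgeSet ∧ e ≠ s(i0, i1) ∧ ∀ i ∈ e, upd2 i0 i1 x 0 0 i = 1) = ∅ := by
      rw [Finset.filter_eq_empty_iff]
      rintro e -
      rintro ⟨he, hne, hsat⟩
      induction e with
      | _ u w =>
        have huv : u ≠ w := G.ne_of_adj (G.mem_edgeSet.mp he)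
        have key : ∀ i, upd2 i0 i1 x 0 0 i = 1 → i = v := by
          intro i hi
          simp only [upd2, hx] at hi
          split_ifs at hi with h1 h2 h3
          · exact absurd hi (by decide)
          · exact absurd hi (by decide)
          · exact h3
          · exact absurd hi (by decide)
        have hu := key u (hsat u (Sym2.mem_mk_left _ _))
        have hw := key w (hsat w (Sym2.mem_mk_right _ _))
        exact huv (hu.trans hw.symm)
    rw [wgt, hempty]
    simp
  · subst hb
    have hone : (Finset.univ.filter fun e : Sym2 (Fin n) =>
        e ∈ G.edgeSet ∧ e ≠ s(i0, i1) ∧ ∀ i ∈ e, upd2 i0 i1 x 0 1 i = 1) = {s(i1, v)} := by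
      ext e
      simp only [Finset.mem_filter, Finset.mem_univ, true_and, Finset.mem_singleton]
      constructor
      · rintro ⟨he, hne, hsat⟩
        induction e with
        | _ u w =>
          have huw : u ≠ w := G.ne_of_adj (G.mem_edgeSet.mp he)
          have key : ∀ i, upd2 i0 i1 x 0 1 i = 1 → i = i1 ∨ i = v := by
            intro i hi
            simp only [upd2, hx] at hi
            split_ifs at hi with h1 h2 h3
            · exact absurd hi (by decide)
            · exact Or.inl h2
            · exact Or.inr h3
            · exact absurd hi (by decide)
          have hu := key u (hsat u (Sym2.mem_mk_left _ _))
          have hw := key w (hsat w (Sym2.mem_mk_right _ _))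
          rcases hu with hu | hu <;> rcases hw with hw | hw
          · exact absurd (hu.trans hw.symm) huw
          · rw [hu, hw]
          · rw [hu, hw]; exact Sym2.eq_swap
          · exact absurd (hu.trans hw.symm) huw
      · rintro rfl
        refine ⟨G.mem_edgeSet.mpr hv1, ?_, ?_⟩
        · intro hcon
          rw [Sym2.eq_iff] at hcon
          rcases hcon with ⟨h1, h2⟩ | ⟨h1, h2⟩
          · exact h01 h1.symm
          · exact hv0 h2
        · intro i hi
          rw [Sym2.mem_iff] at hi
          rcases hi with rfl | rfl
          · rw [upd2_apply_i1 h01]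
          · rw [upd2_apply_other hv0 hvne]
            simp [hx]
    rw [wgt, hone]
    simp

lemma walk_closed {V : Type*} {G : SimpleGraph V} (S : Set V)
    (hS : ∀ a ∈ S, ∀ b, G.Adj a b → b ∈ S) {a b : V} (p : G.Walk a b) (ha : a ∈ S) : b ∈ S := by
  induction p with
  | nil => exact ha
  | cons h p ih => exact ih (hS _ ha _ h)

lemma exists_other_neighbor (hn : 3 ≤ n) (G : SimpleGraph (Fin n)) (hconn : G.Connected)
    (i0 i1 : Fin n) (h01 : i0 ≠ i1) (hleaf : G.neighborSet i0 = {i1}) :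
    ∃ v, G.Adj i1 v ∧ v ≠ i0 ∧ v ≠ i1 := by
  by_contra hcon
  push_neg at hcon
  have hS : ∀ a ∈ ({i0, i1} : Set (Fin n)), ∀ b, G.Adj a b → b ∈ ({i0, i1} : Set (Fin n)) := by
    rintro a (rfl | rfl) b hab
    · have : b ∈ G.neighborSet a := hab
      rw [hleaf] at this
      exact Or.inr this
    · by_cases hb0 : b = i0
      · exact Or.inl hb0
      · exact Or.inr (hcon b hab hb0)
  -- find a third vertex
  have : ∃ w : Fin n, w ≠ i0 ∧ w ≠ i1 := by
    by_contra hw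
    push_neg at hw
    have hcard : (Finset.univ : Finset (Fin n)).card ≤ ({i0, i1} : Finset (Fin n)).card := by
      apply Finset.card_le_card
      intro w _
      rcases eq_or_ne w i0 with rfl | hw0
      · exact Finset.mem_insert_self _ _
      · simp [hw w hw0]
    have h2 : ({i0, i1} : Finset (Fin n)).card ≤ 2 := Finset.card_insert_le _ _ |>.trans (by simp)
    simp [Finset.card_univ] at hcard
    omega
  obtain ⟨w, hw0, hw1⟩ := this
  have hreach := hconn.preconnected i0 w
  obtain ⟨p⟩ := hreach
  have := walk_closed ({i0, i1} : Set (Fin n)) hS p (Or.inl rfl)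
  rcases this with h | h
  · exact hw0 h
  · exact hw1 h


lemma uexp_neg_PZ (α : ℝ) : uexp (-α) PZ
    = !![Complex.exp (-(Complex.I * α)), 0; 0, Complex.exp (Complex.I * α)] := by
  rw [uexp_PZ]
  ext i j
  fin_cases i <;> fin_cases j <;> simp [Complex.ofReal_neg, mul_neg, neg_neg]

lemma sgn_00 : sgn 0 0 = 1 := by simp [sgn]
lemma sgn_01 : sgn 0 1 = 1 := by simp [sgn]
lemma sgn_10 : sgn 1 0 = 1 := by simp [sgn]
lemma sgn_11 : sgn 1 1 = -1 := by simp [sgn]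

end AuxStmt3

/-- For a leaf-parent pair `(1,2)` the operators `e^{iαX}⊗e^{-iαZ}⊗𝟙` are symmetries of `|G⟩`,
and these are the only symmetries of `|G⟩` of the form `U₁⊗U₂⊗𝟙`. -/
theorem stmt3 {n : ℕ} (hn : 3 ≤ n) (G : SimpleGraph (Fin n)) (hconn : G.Connected)
    (hleaf : G.neighborSet ⟨0, by omega⟩ = {⟨1, by omega⟩}) :
    (∀ α : ℝ,
      localOp (fun k => if k = ⟨0, by omega⟩ then uexp α PX
        else if k = ⟨1, by omega⟩ then uexp (-α) PZ else 1) ∈ symUG G) ∧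
    ∀ U₁ U₂ : Mat2, U₁ ∈ Matrix.unitaryGroup (Fin 2) ℂ → U₂ ∈ Matrix.unitaryGroup (Fin 2) ℂ →
      localOp (fun k => if k = ⟨0, by omega⟩ then U₁
        else if k = ⟨1, by omega⟩ then U₂ else 1) ∈ symUG G →
      ∃ α : ℝ, PropTo U₁ (uexp α PX) ∧ PropTo U₂ (uexp (-α) PZ) := by
  classical
  set i0 : Fin n := ⟨0, by omega⟩ with hi0def
  set i1 : Fin n := ⟨1, by omega⟩ with hi1def
  have h01 : i0 ≠ i1 := by
    intro h
    have := congrArg Fin.val h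
    simp [hi0def, hi1def] at this
  set C : ℂ := (((Real.sqrt 2)⁻¹ ^ n : ℝ) : ℂ) with hCdef
  have hC : C ≠ 0 := by
    rw [hCdef]
    rw [Complex.ofReal_ne_zero]
    exact pow_ne_zero _ (inv_ne_zero (Real.sqrt_ne_zero'.mpr two_pos))
  constructor
  · -- forward direction
    intro α
    have huv : Complex.exp (Complex.I * α) * Complex.exp (-(Complex.I * α)) = 1 :=
      exp_I_mul_neg α
    refine ⟨⟨_, ?_, rfl⟩, 1, ?_⟩
    · intro j
      by_cases hj0 : j = i0
      · simp only [hj0, if_pos rfl]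
        exact uexp_PX_unitary α
      · by_cases hj1 : j = i1
        · simp only [hj1, if_neg (hj1 ▸ (Ne.symm h01)), if_pos rfl]
          exact uexp_PZ_unitary (-α)
        · simp only [if_neg hj0, if_neg hj1]
          exact Matrix.mem_unitaryGroup_iff.mpr (by simp)
    · rw [one_smul]
      funext x
      rw [mulVec_localOp_two i0 i1 h01]
      simp only [graphState_upd2 G i0 i1 h01 hleaf]
      rw [graphState_eq_self G i0 i1 h01 hleaf x]
      simp only [Fin.sum_univ_two]
      rw [uexp_PX α, uexp_neg_PZ α]
      rcases fin2_eq_zero_or_one (x i0) with h0 | h0 <;>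
        rcases fin2_eq_zero_or_one (x i1) with h1 | h1 <;>
        rw [h0, h1] <;>
        simp only [Matrix.smul_apply, smul_eq_mul, Matrix.of_apply, Matrix.cons_val',
          Matrix.cons_val_zero, Matrix.cons_val_one, Matrix.head_cons, Matrix.head_fin_const,
          Matrix.empty_val', Matrix.cons_val_fin_one, sgn_00, sgn_01, sgn_10, sgn_11] <;>
        first
          | linear_combination C * wgt G i0 i1 x 0 * huv
          | linear_combination C * wgt G i0 i1 x 1 * huv
          | linear_combination (-C) * wgt G i0 i1 x 1 * huv
  · -- converse direction
    intro U₁ U₂ hU1 hU2 hmem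
    obtain ⟨-, μ, hμ⟩ := hmem
    obtain ⟨v, hv1, hv0, hvne⟩ := exists_other_neighbor hn G hconn i0 i1 h01 hleaf
    have hdet1 : U₁ 0 0 * U₁ 1 1 - U₁ 0 1 * U₁ 1 0 ≠ 0 := by
      have h := Matrix.mem_unitaryGroup_iff.mp hU1
      have hd := congrArg Matrix.det h
      rw [Matrix.det_mul, Matrix.det_one] at hd
      have := left_ne_zero_of_mul_eq_one hd
      rwa [Matrix.det_fin_two] at this
    have hdet2 : U₂ 0 0 * U₂ 1 1 - U₂ 0 1 * U₂ 1 0 ≠ 0 := by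
      have h := Matrix.mem_unitaryGroup_iff.mp hU2
      have hd := congrArg Matrix.det h
      rw [Matrix.det_mul, Matrix.det_one] at hd
      have := left_ne_zero_of_mul_eq_one hd
      rwa [Matrix.det_fin_two] at this
    -- master equation
    have K : ∀ (x : Fin n → Fin 2) (a₀ b₀ : Fin 2),
        U₁ a₀ 0 * U₂ b₀ 0 * (C * (sgn 0 0 * wgt G i0 i1 x 0))
        + U₁ a₀ 0 * U₂ b₀ 1 * (C * (sgn 0 1 * wgt G i0 i1 x 1))
        + (U₁ a₀ 1 * U₂ b₀ 0 * (C * (sgn 1 0 * wgt G i0 i1 x 0))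
        + U₁ a₀ 1 * U₂ b₀ 1 * (C * (sgn 1 1 * wgt G i0 i1 x 1)))
        = μ * (C * (sgn a₀ b₀ * wgt G i0 i1 x b₀)) := by
      intro x a₀ b₀
      have h := congrFun hμ (upd2 i0 i1 x a₀ b₀)
      rw [mulVec_localOp_two i0 i1 h01] at h
      simp only [upd2_upd2, upd2_apply_i0, upd2_apply_i1 h01,
        graphState_upd2 G i0 i1 h01 hleaf, Pi.smul_apply, smul_eq_mul,
        Fin.sum_univ_two] at h
      exact h
    have hw0 : ∀ b, wgt G i0 i1 (fun _ => 0) b = 1 := wgt_zero G i0 i1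
    have hwv0 : wgt G i0 i1 (fun k => if k = v then 1 else 0) 0 = 1 := by
      rw [wgt_single G i0 i1 v h01 hv1 hv0]
      norm_num
    have hwv1 : wgt G i0 i1 (fun k => if k = v then 1 else 0) 1 = -1 := by
      rw [wgt_single G i0 i1 v h01 hv1 hv0]
      norm_num
    have A1 : U₁ 0 0 * (U₂ 0 0 + U₂ 0 1) + U₁ 0 1 * (U₂ 0 0 - U₂ 0 1) = μ := by
      have h := K (fun _ => 0) 0 0
      simp only [hw0, sgn_00, sgn_01, sgn_10, sgn_11] at h
      apply mul_left_cancel₀ hC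
      linear_combination h
    have A2 : U₁ 0 0 * (U₂ 1 0 + U₂ 1 1) + U₁ 0 1 * (U₂ 1 0 - U₂ 1 1) = μ := by
      have h := K (fun _ => 0) 0 1
      simp only [hw0, sgn_00, sgn_01, sgn_10, sgn_11] at h
      apply mul_left_cancel₀ hC
      linear_combination h
    have A3 : U₁ 1 0 * (U₂ 0 0 + U₂ 0 1) + U₁ 1 1 * (U₂ 0 0 - U₂ 0 1) = μ := by
      have h := K (fun _ => 0) 1 0
      simp only [hw0, sgn_00, sgn_01, sgn_10, sgn_11] at h
      apply mul_left_cancel₀ hC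
      linear_combination h
    have A4 : U₁ 1 0 * (U₂ 1 0 + U₂ 1 1) + U₁ 1 1 * (U₂ 1 0 - U₂ 1 1) = -μ := by
      have h := K (fun _ => 0) 1 1
      simp only [hw0, sgn_00, sgn_01, sgn_10, sgn_11] at h
      apply mul_left_cancel₀ hC
      linear_combination h
    have B1 : U₁ 0 0 * (U₂ 0 0 - U₂ 0 1) + U₁ 0 1 * (U₂ 0 0 + U₂ 0 1) = μ := by
      have h := K (fun k => if k = v then 1 else 0) 0 0
      simp only [hwv0, hwv1, sgn_00, sgn_01, sgn_10, sgn_11] at h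
      apply mul_left_cancel₀ hC
      linear_combination h
    have B2 : U₁ 0 0 * (U₂ 1 0 - U₂ 1 1) + U₁ 0 1 * (U₂ 1 0 + U₂ 1 1) = -μ := by
      have h := K (fun k => if k = v then 1 else 0) 0 1
      simp only [hwv0, hwv1, sgn_00, sgn_01, sgn_10, sgn_11] at h
      apply mul_left_cancel₀ hC
      linear_combination h
    have B3 : U₁ 1 0 * (U₂ 0 0 - U₂ 0 1) + U₁ 1 1 * (U₂ 0 0 + U₂ 0 1) = μ := by
      have h := K (fun k => if k = v then 1 else 0) 1 0
      simp only [hwv0, hwv1, sgn_00, sgn_01, sgn_10, sgn_11] at h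
      apply mul_left_cancel₀ hC
      linear_combination h
    have B4 : U₁ 1 0 * (U₂ 1 0 - U₂ 1 1) + U₁ 1 1 * (U₂ 1 0 + U₂ 1 1) = μ := by
      have h := K (fun k => if k = v then 1 else 0) 1 1
      simp only [hwv0, hwv1, sgn_00, sgn_01, sgn_10, sgn_11] at h
      apply mul_left_cancel₀ hC
      linear_combination h
    -- μ ≠ 0
    have hμ0 : μ ≠ 0 := by
      intro h0
      have h1 : U₂ 0 0 * (U₁ 0 0 + U₁ 0 1) = 0 := by linear_combination (A1 + B1) / 2 + h0
      have h2 : U₂ 0 0 * (U₁ 1 0 + U₁ 1 1) = 0 := by linear_combination (A3 + B3) / 2 + h0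
      have h3 : U₂ 0 1 * (U₁ 0 0 - U₁ 0 1) = 0 := by linear_combination (A1 - B1) / 2
      have h4 : U₂ 0 1 * (U₁ 1 0 - U₁ 1 1) = 0 := by linear_combination (A3 - B3) / 2
      rcases mul_eq_zero.mp h1 with ha | hpq
      · rcases mul_eq_zero.mp h3 with hb | hpq'
        · exact hdet2 (by linear_combination U₂ 1 1 * ha - U₂ 1 0 * hb)
        · rcases mul_eq_zero.mp h4 with hb | hrt'
          · exact hdet2 (by linear_combination U₂ 1 1 * ha - U₂ 1 0 * hb)
          · exact hdet1 (by linear_combination U₁ 1 1 * hpq' - U₁ 0 1 * hrt')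
      · rcases mul_eq_zero.mp h2 with ha | hrt
        · rcases mul_eq_zero.mp h3 with hb | hpq'
          · exact hdet2 (by linear_combination U₂ 1 1 * ha - U₂ 1 0 * hb)
          · rcases mul_eq_zero.mp h4 with hb | hrt'
            · exact hdet2 (by linear_combination U₂ 1 1 * ha - U₂ 1 0 * hb)
            · exact hdet1 (by linear_combination (U₁ 1 1 / 2) * (hpq + hpq')
                + (U₁ 1 0 / 2) * (hpq' - hpq))
        · exact hdet1 (by linear_combination U₁ 1 1 * hpq - U₁ 0 1 * hrt)
    -- off-diagonal entries of U₂ vanish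
    have hb0 : U₂ 0 1 = 0 := by
      by_contra hb
      have h3 : U₂ 0 1 * (U₁ 1 0 - U₁ 1 1) = 0 := by linear_combination (A3 - B3) / 2
      have hrt' := (mul_eq_zero.mp h3).resolve_left hb
      exact hμ0 (by linear_combination A4 / 2 - B4 / 2 - U₂ 1 1 * hrt')
    have hc0 : U₂ 1 0 = 0 := by
      by_contra hc
      have h5 : U₂ 1 0 * (U₁ 0 0 + U₁ 0 1) = 0 := by linear_combination (A2 + B2) / 2
      have hpq := (mul_eq_zero.mp h5).resolve_left hc
      exact hμ0 (by linear_combination U₂ 0 0 * hpq - (A1 + B1) / 2)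
    -- diagonal entries have modulus one
    have haa : U₂ 0 0 * (starRingEnd ℂ) (U₂ 0 0) = 1 := by
      have h := Matrix.mem_unitaryGroup_iff.mp hU2
      have := congrFun (congrFun h 0) 0
      simp only [Matrix.mul_apply, Fin.sum_univ_two, Matrix.one_apply, Matrix.star_apply,
        Complex.star_def, if_pos rfl] at this
      rw [hb0] at this
      simpa using this
    have hdd : U₂ 1 1 * (starRingEnd ℂ) (U₂ 1 1) = 1 := by
      have h := Matrix.mem_unitaryGroup_iff.mp hU2
      have := congrFun (congrFun h 1) 1
      simp only [Matrix.mul_apply, Fin.sum_univ_two, Matrix.one_apply, Matrix.star_apply,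
        Complex.star_def, if_pos rfl] at this
      rw [hc0] at this
      simpa using this
    have ha0 : U₂ 0 0 ≠ 0 := left_ne_zero_of_mul_eq_one haa
    have hd0 : U₂ 1 1 ≠ 0 := left_ne_zero_of_mul_eq_one hdd
    -- choose α
    set z : ℂ := U₂ 1 1 / U₂ 0 0 with hzdef
    have habsz : ‖z‖ = 1 := by
      have h1 : ‖U₂ 0 0‖ = 1 := by
        have h := haa
        rw [Complex.mul_conj, Complex.ofReal_eq_one] at h
        rw [Complex.norm_def, h, Real.sqrt_one]
      have h2 : ‖U₂ 1 1‖ = 1 := by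
        have h := hdd
        rw [Complex.mul_conj, Complex.ofReal_eq_one] at h
        rw [Complex.norm_def, h, Real.sqrt_one]
      rw [hzdef, norm_div, h1, h2, div_one]
    set α : ℝ := z.arg / 2 with hαdef
    set u : ℂ := Complex.exp (Complex.I * α) with hudef
    set w : ℂ := Complex.exp (-(Complex.I * α)) with hwdef
    have huv : u * w = 1 := exp_I_mul_neg α
    have huu : u * u = z := by
      rw [hudef, ← Complex.exp_add]
      have harg : Complex.I * α + Complex.I * α = z.arg * Complex.I := by
        rw [hαdef]
        push_cast
        ring
      rw [harg]
      have := Complex.norm_mul_exp_arg_mul_I z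
      rwa [habsz, Complex.ofReal_one, one_mul] at this
    have hz3 : U₂ 0 0 * (u * u) = U₂ 1 1 := by
      rw [huu, hzdef]
      field_simp
    -- linear equations with b = c = 0
    have hA1' : (U₁ 0 0 + U₁ 0 1) * U₂ 0 0 = μ := by
      linear_combination A1 + (U₁ 0 1 - U₁ 0 0) * hb0
    have hA2' : (U₁ 0 0 - U₁ 0 1) * U₂ 1 1 = μ := by
      linear_combination A2 - (U₁ 0 0 + U₁ 0 1) * hc0
    have hA3' : (U₁ 1 0 + U₁ 1 1) * U₂ 0 0 = μ := by
      linear_combination A3 + (U₁ 1 1 - U₁ 1 0) * hb0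
    have hA4' : (U₁ 1 0 - U₁ 1 1) * U₂ 1 1 = -μ := by
      linear_combination A4 - (U₁ 1 0 + U₁ 1 1) * hc0
    refine ⟨α, ⟨μ * (U₂ 0 0 * u)⁻¹, ?_, ?_⟩, ⟨U₂ 0 0 * u, ?_, ?_⟩⟩
    · exact mul_ne_zero hμ0 (inv_ne_zero (mul_ne_zero ha0 (Complex.exp_ne_zero _)))
    · rw [uexp_PX α, ← hudef, ← hwdef]
      have hau : U₂ 0 0 * u ≠ 0 := mul_ne_zero ha0 (Complex.exp_ne_zero _)
      ext i j
      fin_cases i <;> fin_cases j <;>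
        · simp only [Fin.mk_zero, Fin.mk_one, Fin.isValue, Matrix.smul_apply, smul_eq_mul,
            Matrix.of_apply, Matrix.cons_val', Matrix.cons_val_zero, Matrix.cons_val_one,
            Matrix.head_cons, Matrix.head_fin_const, Matrix.empty_val', Matrix.cons_val_fin_one]
          rw [eq_comm, mul_comm μ, mul_assoc, inv_mul_eq_iff_eq_mul₀ hau]
          first
            | linear_combination -((2:ℂ)⁻¹ * u * hA1') - (2:ℂ)⁻¹ * w * hA2'
                - (2:ℂ)⁻¹ * (U₁ 0 0 - U₁ 0 1) * w * hz3
                + (2:ℂ)⁻¹ * (U₁ 0 0 - U₁ 0 1) * U₂ 0 0 * u * huv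
            | linear_combination -((2:ℂ)⁻¹ * u * hA1') + (2:ℂ)⁻¹ * w * hA2'
                + (2:ℂ)⁻¹ * (U₁ 0 0 - U₁ 0 1) * w * hz3
                - (2:ℂ)⁻¹ * (U₁ 0 0 - U₁ 0 1) * U₂ 0 0 * u * huv
            | linear_combination -((2:ℂ)⁻¹ * u * hA3') - (2:ℂ)⁻¹ * w * hA4'
                - (2:ℂ)⁻¹ * (U₁ 1 0 - U₁ 1 1) * w * hz3
                + (2:ℂ)⁻¹ * (U₁ 1 0 - U₁ 1 1) * U₂ 0 0 * u * huv
            | linear_combination -((2:ℂ)⁻¹ * u * hA3') + (2:ℂ)⁻¹ * w * hA4'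
                + (2:ℂ)⁻¹ * (U₁ 1 0 - U₁ 1 1) * w * hz3
                - (2:ℂ)⁻¹ * (U₁ 1 0 - U₁ 1 1) * U₂ 0 0 * u * huv
    · exact mul_ne_zero ha0 (Complex.exp_ne_zero _)
    · rw [uexp_neg_PZ α, ← hudef, ← hwdef]
      ext i j
      fin_cases i <;> fin_cases j <;>
        simp only [Fin.mk_zero, Fin.mk_one, Fin.isValue, Matrix.smul_apply, smul_eq_mul,
          Matrix.of_apply, Matrix.cons_val', Matrix.cons_val_zero, Matrix.cons_val_one,
          Matrix.head_cons, Matrix.head_fin_const, Matrix.empty_val', Matrix.cons_val_fin_one,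
          mul_zero]
      · linear_combination -(U₂ 0 0) * huv
      · exact hb0
      · exact hc0
      · linear_combination -hz3

end
end

section
/- Let ψ be an n-qubit stabilizer state with stabilizer S_ψ, and let P ∈ P_n satisfy Pψ = cψ for some c ∈ ℂ. Then there exists λ ∈ {1, −1, i, −i} such that λP ∈ S_ψ. -/
open Matrix
open scoped Classical

noncomputable section

section StabAux

variable {n : ℕ}

/-- A single-qubit Pauli matrix (including the identity). -/
def IsP (A : Mat2) : Prop := A = 1 ∨ A = PX ∨ A = PY ∨ A = PZ

lemma mem4 {c : ℂ} (h : c ^ 4 = 1) : c ∈ ({1, -1, Complex.I, -Complex.I} : Set ℂ) := by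
  simp only [Set.mem_insert_iff, Set.mem_singleton_iff]
  have h2 : (c ^ 2 - 1) * (c ^ 2 + 1) = 0 := by linear_combination h
  rcases mul_eq_zero.mp h2 with h' | h'
  · have h3 : (c - 1) * (c + 1) = 0 := by linear_combination h'
    rcases mul_eq_zero.mp h3 with h4 | h4
    · exact Or.inl (by linear_combination h4)
    · exact Or.inr (Or.inl (by linear_combination h4))
  · have hI : Complex.I ^ 2 = -1 := Complex.I_sq
    have h3 : (c - Complex.I) * (c + Complex.I) = 0 := by linear_combination h' - hI
    rcases mul_eq_zero.mp h3 with h4 | h4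
    · exact Or.inr (Or.inr (Or.inl (by linear_combination h4)))
    · exact Or.inr (Or.inr (Or.inr (by linear_combination h4)))

lemma r4_ne_zero {c : ℂ} (h : c ^ 4 = 1) : c ≠ 0 := by
  intro h0; rw [h0] at h; norm_num at h

lemma mXX : PX * PX = 1 := by
  ext i j; fin_cases i <;> fin_cases j <;>
    simp [PX, Matrix.mul_apply, Fin.sum_univ_two, Matrix.one_apply]

lemma mYY : PY * PY = 1 := by
  ext i j; fin_cases i <;> fin_cases j <;>
    simp [PY, Matrix.mul_apply, Fin.sum_univ_two, Matrix.one_apply, Complex.I_mul_I]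

lemma mZZ : PZ * PZ = 1 := by
  ext i j; fin_cases i <;> fin_cases j <;>
    simp [PZ, Matrix.mul_apply, Fin.sum_univ_two, Matrix.one_apply]

lemma mXY : PX * PY = Complex.I • PZ := by
  ext i j; fin_cases i <;> fin_cases j <;>
    simp [PX, PY, PZ, Matrix.mul_apply, Fin.sum_univ_two]

lemma mYX : PY * PX = (-Complex.I) • PZ := by
  ext i j; fin_cases i <;> fin_cases j <;>
    simp [PX, PY, PZ, Matrix.mul_apply, Fin.sum_univ_two]

lemma mYZ : PY * PZ = Complex.I • PX := by
  ext i j; fin_cases i <;> fin_cases j <;>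
    simp [PX, PY, PZ, Matrix.mul_apply, Fin.sum_univ_two]

lemma mZY : PZ * PY = (-Complex.I) • PX := by
  ext i j; fin_cases i <;> fin_cases j <;>
    simp [PX, PY, PZ, Matrix.mul_apply, Fin.sum_univ_two]

lemma mZX : PZ * PX = Complex.I • PY := by
  ext i j; fin_cases i <;> fin_cases j <;>
    simp [PX, PY, PZ, Matrix.mul_apply, Fin.sum_univ_two, Complex.I_mul_I]

lemma mXZ : PX * PZ = (-Complex.I) • PY := by
  ext i j; fin_cases i <;> fin_cases j <;>
    simp [PX, PY, PZ, Matrix.mul_apply, Fin.sum_univ_two, Complex.I_mul_I]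

lemma hI4 : Complex.I ^ 4 = 1 := by
  have : Complex.I ^ 4 = (Complex.I ^ 2) ^ 2 := by ring
  rw [this, Complex.I_sq]; norm_num

lemma hnI4 : (-Complex.I) ^ 4 = 1 := by
  have : (-Complex.I) ^ 4 = (Complex.I ^ 2) ^ 2 := by ring
  rw [this, Complex.I_sq]; norm_num

lemma inv_negI : (-Complex.I)⁻¹ = Complex.I := by
  rw [inv_neg, Complex.inv_I, neg_neg]

lemma IsP.one : IsP 1 := Or.inl rfl
lemma IsP.x : IsP PX := Or.inr (Or.inl rfl)
lemma IsP.y : IsP PY := Or.inr (Or.inr (Or.inl rfl))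
lemma IsP.z : IsP PZ := Or.inr (Or.inr (Or.inr rfl))

lemma IsP.mul {A B : Mat2} (hA : IsP A) (hB : IsP B) :
    ∃ (c : ℂ) (C : Mat2), c ^ 4 = 1 ∧ IsP C ∧ A * B = c • C ∧ B * A = c⁻¹ • C := by
  rcases hA with rfl | rfl | rfl | rfl <;> rcases hB with rfl | rfl | rfl | rfl
  · exact ⟨1, 1, by norm_num, IsP.one, by simp, by simp⟩
  · exact ⟨1, PX, by norm_num, IsP.x, by simp, by simp⟩
  · exact ⟨1, PY, by norm_num, IsP.y, by simp, by simp⟩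
  · exact ⟨1, PZ, by norm_num, IsP.z, by simp, by simp⟩
  · exact ⟨1, PX, by norm_num, IsP.x, by simp, by simp⟩
  · exact ⟨1, 1, by norm_num, IsP.one, by simp [mXX], by simp [mXX]⟩
  · exact ⟨Complex.I, PZ, hI4, IsP.z, mXY, by rw [Complex.inv_I]; exact mYX⟩
  · exact ⟨-Complex.I, PY, hnI4, IsP.y, mXZ, by rw [inv_negI]; exact mZX⟩
  · exact ⟨1, PY, by norm_num, IsP.y, by simp, by simp⟩
  · exact ⟨-Complex.I, PZ, hnI4, IsP.z, mYX, by rw [inv_negI]; exact mXY⟩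
  · exact ⟨1, 1, by norm_num, IsP.one, by simp [mYY], by simp [mYY]⟩
  · exact ⟨Complex.I, PX, hI4, IsP.x, mYZ, by rw [Complex.inv_I]; exact mZY⟩
  · exact ⟨1, PZ, by norm_num, IsP.z, by simp, by simp⟩
  · exact ⟨Complex.I, PY, hI4, IsP.y, mZX, by rw [Complex.inv_I]; exact mXZ⟩
  · exact ⟨-Complex.I, PX, hnI4, IsP.x, mZY, by rw [inv_negI]; exact mYZ⟩
  · exact ⟨1, 1, by norm_num, IsP.one, by simp [mZZ], by simp [mZZ]⟩

lemma IsP.sq {A : Mat2} (hA : IsP A) : A * A = 1 := by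
  rcases hA with rfl | rfl | rfl | rfl
  · simp
  · exact mXX
  · exact mYY
  · exact mZZ

lemma IsP.trace_eq {A : Mat2} (hA : IsP A) : A = 1 ∨ A.trace = 0 := by
  rcases hA with rfl | rfl | rfl | rfl
  · exact Or.inl rfl
  · exact Or.inr (by simp [PX, Matrix.trace, Matrix.diag, Fin.sum_univ_two])
  · exact Or.inr (by simp [PY, Matrix.trace, Matrix.diag, Fin.sum_univ_two])
  · exact Or.inr (by simp [PZ, Matrix.trace, Matrix.diag, Fin.sum_univ_two])

lemma localOp_mul (A B : Fin n → Mat2) :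
    localOp A * localOp B = localOp fun j => A j * B j := by
  ext x y
  have h1 : (localOp fun j => A j * B j) x y
      = ∏ j, ∑ w : Fin 2, A j (x j) w * B j w (y j) := by
    simp [localOp, Matrix.mul_apply]
  rw [Matrix.mul_apply, h1,
    Finset.prod_univ_sum (fun _ : Fin n => (Finset.univ : Finset (Fin 2)))
      (fun j w => A j (x j) w * B j w (y j)), Fintype.piFinset_univ]
  exact Finset.sum_congr rfl fun z _ => by
    simp [localOp, Finset.prod_mul_distrib]

lemma localOp_one : localOp (fun _ : Fin n => (1 : Mat2)) = 1 := by
  ext x y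
  rcases eq_or_ne x y with rfl | hxy
  · simp [localOp, Matrix.one_apply]
  · rw [localOp, Matrix.one_apply, if_neg hxy]
    obtain ⟨j, hj⟩ := Function.ne_iff.mp hxy
    exact Finset.prod_eq_zero (Finset.mem_univ j) (by simp [Matrix.one_apply, hj])

lemma localOp_smul (c : Fin n → ℂ) (A : Fin n → Mat2) :
    localOp (fun j => c j • A j) = (∏ j, c j) • localOp A := by
  ext x y
  simp [localOp, Finset.prod_mul_distrib]

lemma trace_localOp (A : Fin n → Mat2) : (localOp A).trace = ∏ j, (A j).trace := by
  have h := Finset.prod_univ_sum (fun _ : Fin n => (Finset.univ : Finset (Fin 2)))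
    (fun j w => A j w w)
  rw [Fintype.piFinset_univ] at h
  simp only [Matrix.trace, Matrix.diag, localOp]
  exact h.symm

/-- Phased Pauli operators. -/
def PP {n : ℕ} (M : MatQ n) : Prop :=
  ∃ (a : ℂ) (A : Fin n → Mat2), a ^ 4 = 1 ∧ (∀ j, IsP (A j)) ∧ M = a • localOp A

lemma PP.one' : PP (1 : MatQ n) :=
  ⟨1, fun _ => 1, by norm_num, fun _ => IsP.one, by rw [localOp_one, one_smul]⟩

lemma PP.mul {M N : MatQ n} (hM : PP M) (hN : PP N) :
    PP (M * N) ∧ (N * M = M * N ∨ N * M = -(M * N)) := by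
  obtain ⟨a, A, ha, hA, rfl⟩ := hM
  obtain ⟨b, B, hb, hB, rfl⟩ := hN
  choose c C hc hC h1 h2 using fun j => (hA j).mul (hB j)
  set u : ℂ := ∏ j, c j with hu_def
  have hu : u ^ 4 = 1 := by
    rw [hu_def, ← Finset.prod_pow]
    simp [hc]
  have hu0 : u ≠ 0 := r4_ne_zero hu
  have hAB : localOp A * localOp B = u • localOp C := by
    rw [localOp_mul]
    have : (fun j => A j * B j) = fun j => c j • C j := funext fun j => h1 j
    rw [this, localOp_smul]
  have hBA : localOp B * localOp A = u⁻¹ • localOp C := by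
    rw [localOp_mul]
    have : (fun j => B j * A j) = fun j => (c j)⁻¹ • C j := funext fun j => h2 j
    rw [this, localOp_smul, ← Finset.prod_inv_distrib]
  have hMN : (a • localOp A) * (b • localOp B) = (a * b * u) • localOp C := by
    rw [Matrix.smul_mul, Matrix.mul_smul, hAB, smul_smul, smul_smul, mul_assoc]
  have hNM : (b • localOp B) * (a • localOp A) = (a * b * u⁻¹) • localOp C := by
    rw [Matrix.smul_mul, Matrix.mul_smul, hBA, smul_smul, smul_smul]
    ring_nf
  constructor
  · exact ⟨a * b * u, C, by rw [mul_pow, mul_pow, ha, hb, hu]; ring, hC, hMN⟩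
  · have h2' : (u ^ 2 - 1) * (u ^ 2 + 1) = 0 := by linear_combination hu
    rcases mul_eq_zero.mp h2' with h' | h'
    · left
      have : u⁻¹ = u := by
        field_simp
        linear_combination -h'
      rw [hNM, hMN, this]
    · right
      have : u⁻¹ = -u := by
        field_simp
        linear_combination h'
      rw [hNM, hMN, this, ← neg_smul]
      ring_nf

def PPSub (n : ℕ) : Submonoid (MatQ n) where
  carrier := {M | PP M}
  one_mem' := PP.one'
  mul_mem' := fun h1 h2 => (PP.mul h1 h2).1

lemma PN_le_PP : PN n ≤ PPSub n := by
  rw [PN]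
  refine Submonoid.closure_le.mpr ?_
  rintro M ⟨A, hA, rfl⟩
  exact ⟨1, A, by norm_num, hA, (one_smul _ _).symm⟩

lemma scalar_eq_one {ψ : QState n} (hψ : ψ ≠ 0) {a : ℂ} (h : a • ψ = ψ) : a = 1 := by
  obtain ⟨x, hx⟩ := Function.ne_iff.mp hψ
  have hx' : ψ x ≠ 0 := by simpa using hx
  have h' := congrFun h x
  simp only [Pi.smul_apply, smul_eq_mul] at h'
  exact mul_right_cancel₀ hx' (by rw [h', one_mul])

lemma scalar_cancel {ψ : QState n} (hψ : ψ ≠ 0) {a b : ℂ} (h : a • ψ = b • ψ) : a = b := by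
  obtain ⟨x, hx⟩ := Function.ne_iff.mp hψ
  have hx' : ψ x ≠ 0 := by simpa using hx
  have h' := congrFun h x
  simp only [Pi.smul_apply, smul_eq_mul] at h'
  exact mul_right_cancel₀ hx' h'

lemma PP_scalar_or_trace {M : MatQ n} (hM : PP M) :
    (∃ a : ℂ, a ^ 4 = 1 ∧ M = a • (1 : MatQ n)) ∨ M.trace = 0 := by
  obtain ⟨a, A, ha, hA, rfl⟩ := hM
  by_cases h : ∀ j, A j = 1
  · left
    refine ⟨a, ha, ?_⟩
    have : A = fun _ => (1 : Mat2) := funext h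
    rw [this, localOp_one]
  · right
    push_neg at h
    obtain ⟨j, hj⟩ := h
    have htr : (A j).trace = 0 := ((hA j).trace_eq).resolve_left hj
    rw [Matrix.trace_smul, trace_localOp,
      Finset.prod_eq_zero (Finset.mem_univ j) htr, smul_zero]

/-- A trace of idempotents lemma. -/
lemma idem_trace_nat {m : Type*} [Fintype m] [DecidableEq m] (E : Matrix m m ℂ)
    (hE : E * E = E) (ψ : m → ℂ) (hψ : ψ ≠ 0) (hEψ : E.mulVec ψ = ψ) :
    ∃ k : ℕ, 0 < k ∧ E.trace = k := by
  have hf : E.mulVecLin ∘ₗ E.mulVecLin = E.mulVecLin := by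
    rw [← Matrix.mulVecLin_mul, hE]
  obtain ⟨p, hp⟩ := (LinearMap.isProj_iff_isIdempotentElem _).mpr hf
  have hmem : ψ ∈ p := by
    have h2 := hp.map_mem ψ
    rwa [Matrix.mulVecLin_apply, hEψ] at h2
  have hpos : 0 < Module.finrank ℂ p :=
    Module.finrank_pos_iff_exists_ne_zero.mpr
      ⟨⟨ψ, hmem⟩, fun hc => hψ (by simpa using congrArg Subtype.val hc)⟩
  refine ⟨Module.finrank ℂ p, hpos, ?_⟩
  have htr := hp.trace
  have hbridge : LinearMap.trace ℂ _ E.mulVecLin = E.trace := by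
    rw [LinearMap.trace_eq_matrix_trace ℂ (Pi.basisFun ℂ m), LinearMap.toMatrix_eq_toMatrix',
      ← Matrix.toLin'_apply', LinearMap.toMatrix'_toLin']
  rw [← hbridge, htr]

/-! Stabilizer subset products. -/

def sProd (s : StabState n) (T : Finset (Fin n)) : MatQ n :=
  T.noncommProd s.g fun a _ b _ _ => s.g_comm a b

lemma sProd_empty (s : StabState n) : sProd s ∅ = 1 := Finset.noncommProd_empty _ _

lemma sProd_insert (s : StabState n) {a : Fin n} {T : Finset (Fin n)} (ha : a ∉ T) :
    sProd s (insert a T) = s.g a * sProd s T :=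
  Finset.noncommProd_insert_of_notMem _ _ _ _ ha

lemma commute_sProd (s : StabState n) (x : MatQ n) (h : ∀ j, Commute x (s.g j))
    (T : Finset (Fin n)) : Commute x (sProd s T) :=
  Finset.noncommProd_commute _ _ _ _ fun j _ => h j

lemma sProd_mem (s : StabState n) (T : Finset (Fin n)) : sProd s T ∈ s.stab :=
  Submonoid.noncommProd_mem _ _ _ _ fun j _ => Submonoid.subset_closure ⟨j, rfl⟩

lemma sProd_mem_PN (s : StabState n) (T : Finset (Fin n)) : sProd s T ∈ PN n :=
  Submonoid.noncommProd_mem _ _ _ _ fun j _ => s.g_mem j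

lemma sProd_mulVec (s : StabState n) (T : Finset (Fin n)) :
    (sProd s T).mulVec s.ψ = s.ψ := by
  induction T using Finset.induction_on with
  | empty => rw [sProd_empty, Matrix.one_mulVec]
  | insert _ _ ha ih =>
    rw [sProd_insert s ha, ← Matrix.mulVec_mulVec, ih, s.stabilizes]

lemma g_sq (s : StabState n) (j : Fin n) : s.g j * s.g j = 1 := by
  obtain ⟨a, A, ha, hA, hg⟩ := PN_le_PP (s.g_mem j)
  have hsq : s.g j * s.g j = (a * a) • (1 : MatQ n) := by
    rw [hg, Matrix.smul_mul, Matrix.mul_smul, localOp_mul, smul_smul]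
    have : (fun k => A k * A k) = fun _ => (1 : Mat2) := funext fun k => (hA k).sq
    rw [this, localOp_one]
  have hst : (s.g j * s.g j).mulVec s.ψ = s.ψ := by
    rw [← Matrix.mulVec_mulVec, s.stabilizes, s.stabilizes]
  rw [hsq] at hst
  rw [Matrix.smul_mulVec, Matrix.one_mulVec] at hst
  rw [hsq, scalar_eq_one s.ψ_ne hst, one_smul]

lemma sProd_sq (s : StabState n) (T : Finset (Fin n)) : sProd s T * sProd s T = 1 := by
  induction T using Finset.induction_on with
  | empty => rw [sProd_empty, one_mul]
  | @insert a T ha ih =>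
    have hc : Commute (s.g a) (sProd s T) :=
      commute_sProd s _ (fun j => s.g_comm a j) T
    rw [sProd_insert s ha]
    have h2 : (s.g a * sProd s T) * (s.g a * sProd s T)
        = (s.g a * s.g a) * (sProd s T * sProd s T) := by
      rw [mul_assoc, ← mul_assoc (sProd s T), ← hc.eq, mul_assoc, ← mul_assoc]
    rw [h2, g_sq, ih, one_mul]

def toggle (a : Fin n) (T : Finset (Fin n)) : Finset (Fin n) :=
  if a ∈ T then T.erase a else insert a T

lemma toggle_invol (a : Fin n) : Function.Involutive (toggle a) := by
  intro T
  unfold toggle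
  by_cases h : a ∈ T
  · rw [if_pos h, if_neg (Finset.notMem_erase a T), Finset.insert_erase h]
  · rw [if_neg h, if_pos (Finset.mem_insert_self a T), Finset.erase_insert h]

lemma g_mul_sProd (s : StabState n) (a : Fin n) (T : Finset (Fin n)) :
    s.g a * sProd s T = sProd s (toggle a T) := by
  unfold toggle
  by_cases h : a ∈ T
  · rw [if_pos h]
    have h2 : sProd s T = s.g a * sProd s (T.erase a) := by
      conv_lhs => rw [← Finset.insert_erase h]
      exact sProd_insert s (Finset.notMem_erase a T)
    rw [h2, ← mul_assoc, g_sq, one_mul]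
  · rw [if_neg h]
    exact (sProd_insert s h).symm

def gSum (s : StabState n) : MatQ n := ∑ T : Finset (Fin n), sProd s T

lemma g_mul_gSum (s : StabState n) (a : Fin n) : s.g a * gSum s = gSum s := by
  rw [gSum, Finset.mul_sum]
  calc ∑ T : Finset (Fin n), s.g a * sProd s T
      = ∑ T : Finset (Fin n), sProd s (toggle a T) :=
        Finset.sum_congr rfl fun T _ => g_mul_sProd s a T
    _ = ∑ T : Finset (Fin n), sProd s T :=
        Equiv.sum_comp (Function.Involutive.toPerm _ (toggle_invol a)) (sProd s)

lemma sProd_mul_gSum (s : StabState n) (T : Finset (Fin n)) :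
    sProd s T * gSum s = gSum s := by
  induction T using Finset.induction_on with
  | empty => rw [sProd_empty, one_mul]
  | insert _ _ ha ih => rw [sProd_insert s ha, mul_assoc, ih, g_mul_gSum]

lemma gSum_mul_gSum (s : StabState n) : gSum s * gSum s = ((2 : ℂ) ^ n) • gSum s := by
  nth_rewrite 1 [gSum]
  rw [Finset.sum_mul]
  calc ∑ T : Finset (Fin n), sProd s T * gSum s
      = ∑ _T : Finset (Fin n), gSum s :=
        Finset.sum_congr rfl fun T _ => sProd_mul_gSum s T
    _ = (Fintype.card (Finset (Fin n))) • gSum s := by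
        rw [Finset.sum_const, Finset.card_univ]
    _ = ((2 ^ n : ℕ)) • gSum s := by rw [Fintype.card_finset, Fintype.card_fin]
    _ = ((2 : ℂ) ^ n) • gSum s := by
        rw [← Nat.cast_smul_eq_nsmul ℂ]; norm_num

lemma gSum_mulVec (s : StabState n) : (gSum s).mulVec s.ψ = ((2 : ℂ) ^ n) • s.ψ := by
  rw [gSum]
  have hsum : (∑ T : Finset (Fin n), sProd s T).mulVec s.ψ
      = ∑ T : Finset (Fin n), (sProd s T).mulVec s.ψ := by
    induction (Finset.univ : Finset (Finset (Fin n))) using Finset.induction_on with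
    | empty => simp [Matrix.mulVec_zero]
    | insert _ _ ha ih =>
      rw [Finset.sum_insert ha, Finset.sum_insert ha, Matrix.add_mulVec, ih]
  rw [hsum]
  calc ∑ T : Finset (Fin n), (sProd s T).mulVec s.ψ
      = ∑ _T : Finset (Fin n), s.ψ := Finset.sum_congr rfl fun T _ => sProd_mulVec s T
    _ = (Fintype.card (Finset (Fin n))) • s.ψ := by rw [Finset.sum_const, Finset.card_univ]
    _ = ((2 ^ n : ℕ)) • s.ψ := by rw [Fintype.card_finset, Fintype.card_fin]
    _ = ((2 : ℂ) ^ n) • s.ψ := by rw [← Nat.cast_smul_eq_nsmul ℂ]; norm_num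

lemma trace_sProd_ne (s : StabState n) {T : Finset (Fin n)} (hT : T ≠ ∅) :
    (sProd s T).trace = 0 := by
  rcases PP_scalar_or_trace (PN_le_PP (sProd_mem_PN s T)) with ⟨a, _, hsc⟩ | h0
  · exfalso
    have hst : (sProd s T).mulVec s.ψ = s.ψ := sProd_mulVec s T
    rw [hsc, Matrix.smul_mulVec, Matrix.one_mulVec] at hst
    have ha1 : a = 1 := scalar_eq_one s.ψ_ne hst
    rw [ha1, one_smul] at hsc
    exact hT (s.g_indep T hsc)
  · exact h0

lemma trace_gSum (s : StabState n) : (gSum s).trace = (2 : ℂ) ^ n := by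
  rw [gSum, Matrix.trace_sum]
  rw [Finset.sum_eq_single ∅]
  · rw [sProd_empty, Matrix.trace_one]
    simp [Fintype.card_fun]
  · intro T _ hT
    exact trace_sProd_ne s hT
  · intro h
    exact absurd (Finset.mem_univ ∅) h

end StabAux

/-- A Pauli symmetry of a stabilizer state is, up to a fourth root of unity, an element of the
stabilizer. -/
theorem stmt10 {n : ℕ} (s : StabState n) (P : MatQ n) (hP : P ∈ PN n) (c : ℂ)
    (h : P.mulVec s.ψ = c • s.ψ) :
    ∃ lam : ℂ, lam ∈ ({1, -1, Complex.I, -Complex.I} : Set ℂ) ∧ lam • P ∈ s.stab := by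
  classical
  obtain ⟨a, A, ha4, hA, hPd⟩ := PN_le_PP hP
  have hP2 : P * P = (a * a) • (1 : MatQ n) := by
    rw [hPd, Matrix.smul_mul, Matrix.mul_smul, localOp_mul, smul_smul]
    have hAA : (fun k => A k * A k) = fun _ => (1 : Mat2) := funext fun k => (hA k).sq
    rw [hAA, localOp_one]
  have hcc : c * c = a * a := by
    have h1 : (P * P).mulVec s.ψ = (c * c) • s.ψ := by
      rw [← Matrix.mulVec_mulVec, h, Matrix.mulVec_smul, h, smul_smul]
    rw [hP2, Matrix.smul_mulVec, Matrix.one_mulVec] at h1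
    exact (scalar_cancel s.ψ_ne h1).symm
  have hc4 : c ^ 4 = 1 := by
    have hc' : c ^ 4 = (c * c) * (c * c) := by ring
    rw [hc', hcc]
    calc (a * a) * (a * a) = a ^ 4 := by ring
      _ = 1 := ha4
  have hc0 : c ≠ 0 := r4_ne_zero hc4
  set Q : MatQ n := c⁻¹ • P with hQdef
  have hQPP : PP Q := by
    refine ⟨c⁻¹ * a, A, by rw [mul_pow, inv_pow, hc4, ha4]; norm_num, hA, ?_⟩
    rw [hQdef, hPd, smul_smul]
  have hQψ : Q.mulVec s.ψ = s.ψ := by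
    rw [hQdef, Matrix.smul_mulVec, h, smul_smul, inv_mul_cancel₀ hc0, one_smul]
  have hQ2 : Q * Q = 1 := by
    rw [hQdef, Matrix.smul_mul, Matrix.mul_smul, hP2, smul_smul, smul_smul, ← hcc]
    rw [show c⁻¹ * c⁻¹ * (c * c) = 1 by field_simp, one_smul]
  have hQg : ∀ j, Commute Q (s.g j) := by
    intro j
    have hgPP := PN_le_PP (s.g_mem j)
    rcases (PP.mul hQPP hgPP).2 with heq | hneg
    · exact heq.symm
    · exfalso
      have h1 : (Q * s.g j).mulVec s.ψ = s.ψ := by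
        rw [← Matrix.mulVec_mulVec, s.stabilizes, hQψ]
      have h2 : (s.g j * Q).mulVec s.ψ = s.ψ := by
        rw [← Matrix.mulVec_mulVec, hQψ, s.stabilizes]
      rw [hneg, Matrix.neg_mulVec, h1] at h2
      have h3 : (2 : ℂ) • s.ψ = 0 := by
        rw [two_smul]
        nth_rewrite 1 [← h2]
        exact neg_add_cancel _
      rcases smul_eq_zero.mp h3 with h4 | h4
      · norm_num at h4
      · exact s.ψ_ne h4
  set Pr : MatQ n := ((2 : ℂ) ^ n)⁻¹ • gSum s with hPrdef
  have h2n : ((2 : ℂ) ^ n) ≠ 0 := pow_ne_zero _ two_ne_zero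
  have hPr2 : Pr * Pr = Pr := by
    rw [hPrdef, Matrix.smul_mul, Matrix.mul_smul, gSum_mul_gSum, smul_smul, smul_smul]
    congr 1
    field_simp
  have hPrψ : Pr.mulVec s.ψ = s.ψ := by
    rw [hPrdef, Matrix.smul_mulVec, gSum_mulVec, smul_smul,
      inv_mul_cancel₀ h2n, one_smul]
  have hQPr : Q * Pr = Pr * Q := by
    have hcg : Commute Q (gSum s) := by
      rw [gSum]
      exact Commute.sum_right _ _ _ fun T _ => commute_sProd s Q hQg T
    exact (hcg.smul_right ((2 : ℂ) ^ n)⁻¹).eq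
  have htrPr : Pr.trace = 1 := by
    rw [hPrdef, Matrix.trace_smul, trace_gSum, smul_eq_mul, inv_mul_cancel₀ h2n]
  by_cases hex : ∃ T : Finset (Fin n), Q * sProd s T = 1
  · obtain ⟨T, hT⟩ := hex
    have hQT : Q = sProd s T := by
      calc Q = Q * (sProd s T * sProd s T) := by rw [sProd_sq, mul_one]
        _ = (Q * sProd s T) * sProd s T := by rw [mul_assoc]
        _ = sProd s T := by rw [hT, one_mul]
    refine ⟨c⁻¹, mem4 (by rw [inv_pow, hc4]; norm_num), ?_⟩
    rw [← hQdef, hQT]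
    exact sProd_mem s T
  · push_neg at hex
    exfalso
    have htrQS : ∀ T : Finset (Fin n), (Q * sProd s T).trace = 0 := by
      intro T
      rcases PP_scalar_or_trace ((PP.mul hQPP (PN_le_PP (sProd_mem_PN s T))).1) with
        ⟨b, _, hsc⟩ | h0
      · exfalso
        have hst : (Q * sProd s T).mulVec s.ψ = s.ψ := by
          rw [← Matrix.mulVec_mulVec, sProd_mulVec, hQψ]
        rw [hsc, Matrix.smul_mulVec, Matrix.one_mulVec] at hst
        have hb1 := scalar_eq_one s.ψ_ne hst
        rw [hb1, one_smul] at hsc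
        exact hex T hsc
      · exact h0
    have htrQPr : (Q * Pr).trace = 0 := by
      rw [hPrdef, Matrix.mul_smul, Matrix.trace_smul, gSum, Finset.mul_sum, Matrix.trace_sum,
        Finset.sum_congr rfl fun T _ => htrQS T]
      simp
    set E : MatQ n := (2 : ℂ)⁻¹ • (Pr + Q * Pr) with hEdef
    have h12 : Pr * (Q * Pr) = Q * Pr := by
      rw [← mul_assoc, ← hQPr, mul_assoc, hPr2]
    have h21 : (Q * Pr) * Pr = Q * Pr := by rw [mul_assoc, hPr2]
    have h22 : (Q * Pr) * (Q * Pr) = Pr := by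
      calc (Q * Pr) * (Q * Pr) = Q * (Pr * (Q * Pr)) := by rw [mul_assoc]
        _ = Q * (Q * Pr) := by rw [h12]
        _ = (Q * Q) * Pr := by rw [mul_assoc]
        _ = Pr := by rw [hQ2, one_mul]
    have hEE : E * E = E := by
      rw [hEdef, Matrix.smul_mul, Matrix.mul_smul, smul_smul]
      have hexp : (Pr + Q * Pr) * (Pr + Q * Pr) = (2 : ℂ) • (Pr + Q * Pr) := by
        rw [add_mul, mul_add, mul_add, hPr2, h12, h21, h22, two_smul]
        abel
      rw [hexp, smul_smul]
      norm_num
    have hEψ : E.mulVec s.ψ = s.ψ := by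
      rw [hEdef, Matrix.smul_mulVec, Matrix.add_mulVec, hPrψ,
        ← Matrix.mulVec_mulVec, hPrψ, hQψ, ← two_smul ℂ s.ψ, smul_smul]
      norm_num
    have htrE : E.trace = 2⁻¹ := by
      rw [hEdef, Matrix.trace_smul, Matrix.trace_add, htrPr, htrQPr, smul_eq_mul]
      norm_num
    obtain ⟨k, hk0, hk⟩ := idem_trace_nat E hEE s.ψ s.ψ_ne hEψ
    rw [htrE] at hk
    have h2k : ((2 * k : ℕ) : ℂ) = ((1 : ℕ) : ℂ) := by push_cast; rw [← hk]; norm_num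
    have hnat : 2 * k = 1 := Nat.cast_injective h2k
    omega

end
end

section
/- Let G be a connected simple graph on Fin n with n ≥ 2 and adjacency matrix θ over 𝔽₂, and let Δ be a diagonal n×n matrix over 𝔽₂ with θ·Δ = Δ·θ. Then Δ = 0 or Δ = 𝟙. -/
open Matrix
open scoped Classical

noncomputable section

/-- A diagonal binary matrix commuting with the adjacency matrix of a connected graph is `0`
or `𝟙`. -/
theorem stmt16 {n : ℕ} (hn : 2 ≤ n) (G : SimpleGraph (Fin n)) (hconn : G.Connected)
    (Δ : Matrix (Fin n) (Fin n) (ZMod 2)) (hΔ : Δ.IsDiag)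
    (hcomm : adjMat G * Δ = Δ * adjMat G) :
    Δ = 0 ∨ Δ = 1 := by
  have hadj : ∀ i j : Fin n, G.Adj i j → Δ i i = Δ j j := by
    intro i j hij
    have h := congrFun (congrFun hcomm i) j
    simp only [Matrix.mul_apply] at h
    have hL : ∑ k, adjMat G i k * Δ k j = Δ j j := by
      rw [Finset.sum_eq_single j]
      · simp [adjMat, hij]
      · intro k _ hk
        rw [hΔ hk, mul_zero]
      · simp
    have hR : ∑ k, Δ i k * adjMat G k j = Δ i i := by
      rw [Finset.sum_eq_single i]
      · simp [adjMat, hij]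
      · intro k _ hk
        rw [hΔ (Ne.symm hk), zero_mul]
      · simp
    rw [hL, hR] at h
    exact h.symm
  have hall : ∀ i j : Fin n, Δ i i = Δ j j := by
    intro i j
    obtain ⟨w⟩ := hconn i j
    induction w with
    | nil => rfl
    | cons h p ih => exact (hadj _ _ h).trans ih
  have hdiag : Δ = Matrix.diagonal (fun i => Δ i i) := by
    ext i j
    by_cases h : i = j
    · subst h; simp
    · rw [Matrix.diagonal_apply_ne _ h, hΔ h]
  have hcases : Δ ⟨0, by omega⟩ ⟨0, by omega⟩ = 0 ∨ Δ ⟨0, by omega⟩ ⟨0, by omega⟩ = 1 := by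
    generalize Δ ⟨0, by omega⟩ ⟨0, by omega⟩ = d
    fin_cases d
    · exact Or.inl rfl
    · exact Or.inr rfl
  rcases hcases with h | h
  · left
    rw [hdiag]
    ext i j
    by_cases hij : i = j
    · subst hij; simp [hall i ⟨0, by omega⟩, h]
    · simp [Matrix.diagonal_apply_ne _ hij]
  · right
    rw [hdiag]
    ext i j
    by_cases hij : i = j
    · subst hij; simp [hall i ⟨0, by omega⟩, h]
    · simp [Matrix.diagonal_apply_ne _ hij, Matrix.one_apply_ne hij]

end
end

section
/- Let G be a simple graph on Fin n in which every vertex has odd degree. Then the product of all canonical generators satisfies ∏_{j=1}^n S_(j) = ε·Y^{⊗n} for some ε ∈ {+1, −1}; in particular ε·Y^{⊗n} ∈ S_G. -/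
open Matrix
open scoped Classical

noncomputable section

namespace Stmt18Aux

lemma hZZ : PZ * PZ = 1 := by
  simp [PZ, Matrix.mul_fin_two, Matrix.one_fin_two]

lemma hXZ : PX * PZ = (-Complex.I) • PY := by
  ext i j; fin_cases i <;> fin_cases j <;>
    simp [PX, PZ, PY, Matrix.mul_apply, Fin.sum_univ_two, Complex.ext_iff]

lemma hZX : PZ * PX = Complex.I • PY := by
  ext i j; fin_cases i <;> fin_cases j <;>
    simp [PX, PZ, PY, Matrix.mul_apply, Fin.sum_univ_two, Complex.ext_iff]

lemma hZne1 : PZ ≠ 1 := by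
  intro h
  have := congr_fun (congr_fun h 1) 1
  simp [PZ, Matrix.one_apply] at this
  norm_num [Complex.ext_iff] at this

lemma hXneZ : PX ≠ PZ := by
  intro h
  have := congr_fun (congr_fun h 0) 0
  simp [PZ, PX] at this

lemma localOp_mul {n : ℕ} (A B : Fin n → Mat2) :
    localOp A * localOp B = localOp (fun k => A k * B k) := by
  ext x y
  simp only [localOp, Matrix.mul_apply]
  calc ∑ z : Fin n → Fin 2, (∏ j, A j (x j) (z j)) * ∏ j, B j (z j) (y j)
      = ∑ z : Fin n → Fin 2, ∏ j, (A j (x j) (z j) * B j (z j) (y j)) := by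
        simp [Finset.prod_mul_distrib]
    _ = ∏ j, ∑ t : Fin 2, A j (x j) t * B j t (y j) := by
        rw [Finset.prod_univ_sum, Fintype.piFinset_univ]

lemma localOp_one {n : ℕ} : localOp (fun _ => (1 : Mat2)) = (1 : MatQ n) := by
  ext x y
  simp only [localOp, Matrix.one_apply]
  by_cases h : x = y
  · subst h; simp
  · have : ∃ j, x j ≠ y j := by
      by_contra hc; push_neg at hc; exact h (funext hc)
    obtain ⟨j, hj⟩ := this
    rw [if_neg h]
    exact Finset.prod_eq_zero (Finset.mem_univ j) (by simp [Matrix.one_apply, hj])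

lemma localOp_smul {n : ℕ} (c : Fin n → ℂ) (A : Fin n → Mat2) :
    localOp (fun k => c k • A k) = (∏ k, c k) • localOp A := by
  ext x y
  simp [localOp, Finset.prod_mul_distrib, Matrix.smul_apply, smul_eq_mul]

lemma localOp_list_prod {n : ℕ} (l : List (Fin n → Mat2)) :
    (l.map localOp).prod = localOp (fun k => (l.map (fun A => A k)).prod) := by
  induction l with
  | nil => simpa using localOp_one.symm
  | cons a t ih => simp [ih, localOp_mul]

lemma prodZ (m : List Mat2) (hm : ∀ x ∈ m, x = 1 ∨ x = PZ) :
    (m.prod = 1 ∧ Even (m.countP (fun x => decide (x = PZ)))) ∨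
    (m.prod = PZ ∧ Odd (m.countP (fun x => decide (x = PZ)))) := by
  induction m with
  | nil => left; simp
  | cons a t ih =>
    have ht := ih (fun x hx => hm x (List.mem_cons_of_mem a hx))
    rcases hm a (List.mem_cons_self (a := a) (l := t)) with ha | ha <;> subst ha
    · rw [List.prod_cons, one_mul, List.countP_cons]
      simp only [decide_eq_true_eq, if_neg (Ne.symm hZne1)]
      simpa using ht
    · rw [List.prod_cons, List.countP_cons]
      simp only [decide_eq_true_eq, if_pos rfl]
      rcases ht with ⟨h1, h2⟩ | ⟨h1, h2⟩
      · right; rw [h1, mul_one]; exact ⟨rfl, by simpa [Nat.odd_add_one, Nat.not_odd_iff_even]⟩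
      · left; rw [h1, hZZ]; exact ⟨rfl, by simpa [Nat.even_add_one, Nat.not_even_iff_odd]⟩

lemma card_filter_eq_countP {n : ℕ} (p : Fin n → Prop) [DecidablePred p] :
    (Finset.univ.filter p).card = (List.finRange n).countP (fun j => decide (p j)) := by
  rw [List.countP_eq_length_filter, ← Multiset.coe_card, ← Multiset.filter_coe]
  rfl

lemma slot_prod {n : ℕ} (g : Fin n → Mat2) (k : Fin n)
    (hk : g k = PX) (hother : ∀ j, j ≠ k → g j = 1 ∨ g j = PZ)
    (hoddp : Odd ((Finset.univ.filter fun j => g j = PZ).card)) :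
    (List.ofFn g).prod = Complex.I • PY ∨ (List.ofFn g).prod = (-Complex.I) • PY := by
  set l := List.ofFn g with hl
  have hlen : (k : ℕ) < l.length := by simp [hl]
  have hget : l[(k : ℕ)]'hlen = PX := by
    simp [hl, hk]
  have hsplit : l = l.take (k : ℕ) ++ PX :: l.drop ((k : ℕ) + 1) := by
    conv_lhs => rw [← List.take_append_drop (k : ℕ) l]
    rw [List.drop_eq_getElem_cons hlen, hget]
  have htake : ∀ x ∈ l.take (k : ℕ), x = 1 ∨ x = PZ := by
    intro x hx
    obtain ⟨i, hi, hix⟩ := List.getElem_of_mem hx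
    have hik : i < (k : ℕ) := lt_of_lt_of_le hi (by simp [List.length_take])
    have hil : i < l.length := lt_of_lt_of_le hi (by simp [List.length_take])
    rw [List.getElem_take] at hix
    have : l[i]'hil = g ⟨i, by simpa [hl] using hil⟩ :=
      List.getElem_ofFn (f := g) (i := i) (by simpa [hl] using hil)
    rw [this] at hix
    rw [← hix]
    exact hother _ (by intro h; rw [← h] at hik; simp at hik)
  have hdrop : ∀ x ∈ l.drop ((k : ℕ) + 1), x = 1 ∨ x = PZ := by
    intro x hx
    obtain ⟨i, hi, hix⟩ := List.getElem_of_mem hx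
    have hil : (k : ℕ) + 1 + i < l.length := by
      have := hi; rw [List.length_drop] at this; omega
    rw [List.getElem_drop] at hix
    have : l[(k : ℕ) + 1 + i]'hil = g ⟨(k : ℕ) + 1 + i, by simpa [hl] using hil⟩ :=
      List.getElem_ofFn (f := g) (by simpa [hl] using hil)
    rw [this] at hix
    rw [← hix]
    exact hother _ (by intro h; have := congrArg Fin.val h; simp at this; omega)
  set p : Mat2 → Bool := fun x => decide (x = PZ) with hp
  have hcnt : l.countP p = (Finset.univ.filter fun j => g j = PZ).card := by
    rw [card_filter_eq_countP, hl, List.ofFn_eq_map, List.countP_map]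
    rfl
  have hoddl : Odd (l.countP p) := hcnt ▸ hoddp
  have hsum : l.countP p = (l.take (k : ℕ)).countP p + (l.drop ((k : ℕ) + 1)).countP p := by
    conv_lhs => rw [hsplit]
    rw [List.countP_append, List.countP_cons]
    simp [hp, hXneZ]
  rcases prodZ _ htake with ⟨ht1, ht2⟩ | ⟨ht1, ht2⟩ <;>
    rcases prodZ _ hdrop with ⟨hd1, hd2⟩ | ⟨hd1, hd2⟩
  · exfalso; rw [hsum] at hoddl
    exact Nat.not_odd_iff_even.mpr (Nat.even_add.mpr (by tauto)) hoddl
  · right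
    conv_lhs => rw [hsplit]
    rw [List.prod_append, List.prod_cons, ht1, hd1, one_mul, hXZ]
  · left
    conv_lhs => rw [hsplit]
    rw [List.prod_append, List.prod_cons, ht1, hd1, mul_one, hZX]
  · exfalso; rw [hsum] at hoddl
    exact Nat.not_odd_iff_even.mpr ((Nat.odd_add.mp hoddl).mp ht2) hd2

end Stmt18Aux

/-- If every vertex of `G` has odd degree, then the product of all canonical generators is
`±Y^{⊗n}`, which in particular lies in `S_G`. -/
theorem stmt18 {n : ℕ} (G : SimpleGraph (Fin n))
    (hodd : ∀ v, Odd (G.neighborSet v).ncard) :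
    ∃ ε : ℂ, (ε = 1 ∨ ε = -1) ∧
      (List.ofFn fun j => canonGen G j).prod = ε • localOp (fun _ => PY) ∧
      ε • localOp (fun _ => PY) ∈ stabGroup G := by
  open Stmt18Aux in
  have hdeg : ∀ v, Odd (G.degree v) := by
    intro v
    have : (G.neighborSet v).ncard = G.degree v := by
      rw [SimpleGraph.degree, SimpleGraph.neighborFinset_def, Set.ncard_eq_toFinset_card']
    rw [← this]; exact hodd v
  have hn : Even n := by
    have h := SimpleGraph.even_card_odd_degree_vertices G
    rwa [Finset.filter_true_of_mem (fun v _ => hdeg v), Finset.card_univ, Fintype.card_fin] at h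
  have hslot : ∀ k : Fin n, ∃ c : ℂ, (c = Complex.I ∨ c = -Complex.I) ∧
      (List.ofFn fun j => canonGenFactor G j k).prod = c • PY := by
    intro k
    have hk : canonGenFactor G k k = PX := by simp [canonGenFactor]
    have hother : ∀ j, j ≠ k → canonGenFactor G j k = 1 ∨ canonGenFactor G j k = PZ := by
      intro j hj
      unfold canonGenFactor
      rw [if_neg (Ne.symm hj)]
      by_cases hadj : G.Adj j k
      · right; rw [if_pos hadj]
      · left; rw [if_neg hadj]
    have hfilt : (Finset.univ.filter fun j => canonGenFactor G j k = PZ) = G.neighborFinset k := by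
      ext j
      simp only [Finset.mem_filter, Finset.mem_univ, true_and, SimpleGraph.mem_neighborFinset]
      constructor
      · intro h
        by_cases hjk : j = k
        · exfalso; subst hjk; rw [hk] at h; exact Stmt18Aux.hXneZ h
        · rcases hother j hjk with h1 | _
          · exact absurd (h1 ▸ h).symm Stmt18Aux.hZne1
          · unfold canonGenFactor at h
            rw [if_neg (Ne.symm hjk)] at h
            by_cases hadj : G.Adj j k
            · exact hadj.symm
            · rw [if_neg hadj] at h; exact absurd h.symm Stmt18Aux.hZne1
      · intro h
        have hadj : G.Adj j k := h.symm
        unfold canonGenFactor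
        rw [if_neg (Ne.symm hadj.ne), if_pos hadj]
    have hoddk : Odd ((Finset.univ.filter fun j => canonGenFactor G j k = PZ).card) := by
      rw [hfilt, SimpleGraph.card_neighborFinset_eq_degree]; exact hdeg k
    rcases Stmt18Aux.slot_prod (fun j => canonGenFactor G j k) k hk hother hoddk with h | h
    · exact ⟨Complex.I, Or.inl rfl, h⟩
    · exact ⟨-Complex.I, Or.inr rfl, h⟩
  choose c hc1 hc2 using hslot
  have hprod : (List.ofFn fun j => canonGen G j).prod = (∏ k, c k) • localOp (fun _ => PY) := by
    have h1 : (List.ofFn fun j => canonGen G j) = (List.ofFn (canonGenFactor G)).map localOp := by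
      rw [List.map_ofFn]; rfl
    rw [h1, Stmt18Aux.localOp_list_prod]
    have h2 : (fun k => ((List.ofFn (canonGenFactor G)).map (fun A => A k)).prod)
        = fun k => c k • PY := by
      funext k
      rw [List.map_ofFn]
      exact hc2 k
    rw [h2, Stmt18Aux.localOp_smul]
  set ε : ℂ := ∏ k, c k with hε
  have hsq : ε * ε = 1 := by
    rw [hε, ← Finset.prod_mul_distrib]
    have : ∀ k : Fin n, c k * c k = -1 := by
      intro k
      rcases hc1 k with h | h <;> rw [h] <;>
        simp [Complex.I_mul_I]
    rw [Finset.prod_congr rfl (fun k _ => this k)]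
    simp [hn.neg_one_pow]
  have hmem : (List.ofFn fun j => canonGen G j).prod ∈ stabGroup G := by
    apply Submonoid.list_prod_mem
    intro x hx
    rw [List.mem_ofFn] at hx
    obtain ⟨j, hj⟩ := hx
    exact Submonoid.subset_closure ⟨j, hj⟩
  refine ⟨ε, mul_self_eq_one_iff.mp hsq, hprod, ?_⟩
  rw [← hprod]; exact hmem

end
end
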